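/- arXiv:2503.18220 — 2 statements merged into one kernel-verified Lean document; each statement's English description precedes it below -/
import Mathlib

section
/- Suppose the priority profile ≿_s satisfies PD, WO, and DC. Then for any subset J of students with 2 ≤ |J| ≤ q_s + 1, there exists a student i ∈ J that has the lowest priority within J; that is, j ≿_s^{J∖{i,j}} i for all j ∈ J∖{i}. -/
open Finset

variable {I T S : Type*}

/-- `a` (a student or the null student `none`) is not a member of `J`. -/
def NotInOpt (a : Option I) (J : Finset I) : Prop := ∀ i ∈ a, i ∉ J

/-- Strict part `≻` of the weak priority order `ge = ≿`. -/
def StrictP (ge : Finset I → Option I → Option I → Prop) (J : Finset I) (a b : Option I) :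
    Prop :=
  ge J a b ∧ ¬ ge J b a

/-- Symmetric part `∼` of the weak priority order `ge = ≿`. -/
def SimP (ge : Finset I → Option I → Option I → Prop) (J : Finset I) (a b : Option I) :
    Prop :=
  ge J a b ∧ ge J b a

/-- `tcnt τ J a` = number of students in `J` of the same type as `a` (0 for the null student). -/
def tcnt [DecidableEq T] (τ : I → T) (J : Finset I) : Option I → ℕ
  | none => 0
  | some i => (J.filter fun x => τ x = τ i).card

/-- Completeness of each `≿ₛᴶ` on `(I∖J) ∪ {∅}`. -/
def CompleteP (q : ℕ) (ge : Finset I → Option I → Option I → Prop) : Prop :=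
  ∀ J : Finset I, J.card < q → ∀ a b : Option I, NotInOpt a J → NotInOpt b J →
    ge J a b ∨ ge J b a

/-- Transitivity of each `≿ₛᴶ` on `(I∖J) ∪ {∅}`. -/
def TransP (q : ℕ) (ge : Finset I → Option I → Option I → Prop) : Prop :=
  ∀ J : Finset I, J.card < q → ∀ a b c : Option I,
    NotInOpt a J → NotInOpt b J → NotInOpt c J → ge J a b → ge J b c → ge J a c

/-- Antisymmetry of each `≿ₛᴶ` (so that it is a linear order). -/
def AntisymP (q : ℕ) (ge : Finset I → Option I → Option I → Prop) : Prop :=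
  ∀ J : Finset I, J.card < q → ∀ a b : Option I, NotInOpt a J → NotInOpt b J →
    ge J a b → ge J b a → a = b

/-- PD (preference for diversity). -/
def PD [DecidableEq T] (τ : I → T) (q : ℕ)
    (ge : Finset I → Option I → Option I → Prop) : Prop :=
  ∀ J J' : Finset I, ∀ a b : Option I,
    J.card < q → J'.card < q →
    NotInOpt a J → NotInOpt b J → NotInOpt a J' → NotInOpt b J' →
    tcnt τ J' a ≤ tcnt τ J a → tcnt τ J b ≤ tcnt τ J' b →
    (StrictP ge J a b → StrictP ge J' a b) ∧ (ge J a b → ge J' a b)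

/-- WO (within-type ordering). -/
def WO [DecidableEq T] (τ : I → T) (q : ℕ)
    (ge : Finset I → Option I → Option I → Prop) : Prop :=
  ∀ J J' : Finset I, ∀ i j : I,
    J.card < q → J'.card < q →
    i ∉ J → j ∉ J → i ∉ J' → j ∉ J' → τ i = τ j →
    (StrictP ge J (some i) (some j) → StrictP ge J' (some i) (some j)) ∧
    (ge J (some i) (some j) → ge J' (some i) (some j))

/-- DC (distributional consistency of WO). -/
def DC [DecidableEq I] [DecidableEq T] (τ : I → T) (q : ℕ)
    (ge : Finset I → Option I → Option I → Prop) : Prop :=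
  ∀ J : Finset I, ∀ i j : I, ∀ k : Option I,
    J.card + 1 < q → i ≠ j → i ∉ J → j ∉ J → NotInOpt k J →
    k ≠ some i → k ≠ some j → τ i = τ j → ge J (some i) (some j) →
    (StrictP ge (insert i J) (some j) k → StrictP ge (insert j J) (some i) k) ∧
    (SimP ge (insert i J) (some j) k → SimP ge (insert j J) (some i) k) ∧
    (StrictP ge (insert i J) k (some j) → StrictP ge (insert j J) k (some i))

/-!
Say that `i` outranks `j` within `J` if `i ≻ j` once the rest of `J` is admitted, i.e. at the
base `J ∖ {i, j}`. The heart of the proof is that this relation is transitive: for distinct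
`i, j, k ∈ J` and `B = J ∖ {i, j, k}` we must get `i ≻^{B+j} k` from `i ≻^{B+k} j` and
`j ≻^{B+i} k`. If the three types are all equal or all distinct, WO resp. PD move both
hypotheses down to the base `B`, where transitivity of `≿^B` applies, and back up to `B+j`.
If exactly two of them share a type, DC exchanges that pair in the base. Being irreflexive
and transitive on the finite set `J`, the relation has an element that outranks nobody, and
by completeness that student has the lowest priority within `J`.
-/

section

variable {q : ℕ} {ge : Finset I → Option I → Option I → Prop} {B : Finset I} {i j k : I}

lemma notInOpt_some {x : I} {J : Finset I} (h : x ∉ J) : NotInOpt (some x) J :=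
  fun _ hx => Option.mem_some_iff.mp hx ▸ h

lemma StrictP.irrefl {a : Option I} : ¬ StrictP ge B a a :=
  fun h => h.2 h.1

lemma StrictP.trans_of_transP (htr : TransP q ge) (hB : B.card < q)
    (hi : i ∉ B) (hj : j ∉ B) (hk : k ∉ B)
    (h₁ : StrictP ge B (some i) (some j)) (h₂ : StrictP ge B (some j) (some k)) :
    StrictP ge B (some i) (some k) :=
  ⟨htr B hB _ _ _ (notInOpt_some hi) (notInOpt_some hj) (notInOpt_some hk) h₁.1 h₂.1,
    fun hki => h₁.2 <|
      htr B hB _ _ _ (notInOpt_some hj) (notInOpt_some hk) (notInOpt_some hi) h₂.1 hki⟩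

lemma ge_of_not_strictP (hcomp : CompleteP q ge) (hB : B.card < q) (hi : i ∉ B) (hj : j ∉ B)
    (h : ¬ StrictP ge B (some j) (some i)) : ge B (some i) (some j) := by
  rcases hcomp B hB (some i) (some j) (notInOpt_some hi) (notInOpt_some hj) with h' | h'
  · exact h'
  · by_contra h''
    exact h ⟨h', h''⟩

end

lemma Finset.exists_forall_not_rel {α : Type*} {r : α → α → Prop} {s : Finset α}
    (hs : s.Nonempty) (hirrefl : ∀ a ∈ s, ¬ r a a)
    (htrans : ∀ a ∈ s, ∀ b ∈ s, ∀ c ∈ s, r a b → r b c → r a c) :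
    ∃ m ∈ s, ∀ x ∈ s, ¬ r m x := by
  let r' : s → s → Prop := fun a b => r b a
  have : IsTrans s r' := ⟨fun a b c hab hbc => htrans c c.2 b b.2 a a.2 hbc hab⟩
  have : Std.Irrefl r' := ⟨fun a => hirrefl a a.2⟩
  obtain ⟨m, -, hm⟩ := (Finite.wellFounded_of_trans_of_irrefl r').has_min Set.univ
    ⟨⟨hs.choose, hs.choose_spec⟩, Set.mem_univ _⟩
  exact ⟨m, m.2, fun x hx => hm ⟨x, hx⟩ (Set.mem_univ _)⟩

section

variable [DecidableEq I]

lemma Finset.sdiff_pair_eq_insert_sdiff {J : Finset I} {x y z : I} (hz : z ∈ J) (hzx : z ≠ x)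
    (hzy : z ≠ y) : J \ {x, y} = insert z (J \ {x, y, z}) := by
  ext a
  simp only [mem_sdiff, mem_insert, mem_singleton]
  grind

lemma Finset.card_sdiff_pair {J : Finset I} {x y : I} (hx : x ∈ J) (hy : y ∈ J) (hxy : x ≠ y) :
    (J \ {x, y}).card = J.card - 2 := by
  rw [card_sdiff_of_subset (by simp [insert_subset_iff, hx, hy]), card_pair hxy]

def OutranksWithin (ge : Finset I → Option I → Option I → Prop) (J : Finset I) (i j : I) : Prop :=
  StrictP ge (J \ {i, j}) (some i) (some j)

variable [DecidableEq T] {τ : I → T} {q : ℕ} {ge : Finset I → Option I → Option I → Prop}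
  {B : Finset I} {i j k : I}

lemma tcnt_insert_of_ne (h : τ k ≠ τ i) :
    tcnt τ (insert k B) (some i) = tcnt τ B (some i) := by
  simp only [tcnt, filter_insert, if_neg h]

lemma strictP_insert_iff (hPD : PD τ q ge) (hWO : WO τ q ge) (hB : B.card + 1 < q)
    (hi : i ∉ insert k B) (hj : j ∉ insert k B) (htype : τ i = τ j ∨ τ k ≠ τ i ∧ τ k ≠ τ j) :
    StrictP ge (insert k B) (some i) (some j) ↔ StrictP ge B (some i) (some j) := by
  have hkB : (insert k B).card < q := (card_insert_le k B).trans_lt hB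
  have hB' : B.card < q := by omega
  have hiB : i ∉ B := fun h => hi (mem_insert_of_mem h)
  have hjB : j ∉ B := fun h => hj (mem_insert_of_mem h)
  rcases htype with hij | ⟨hki, hkj⟩
  · exact ⟨(hWO _ _ i j hkB hB' hi hj hiB hjB hij).1, (hWO _ _ i j hB' hkB hiB hjB hi hj hij).1⟩
  · have hci := tcnt_insert_of_ne (B := B) hki
    have hcj := tcnt_insert_of_ne (B := B) hkj
    have hi' := notInOpt_some hi
    have hj' := notInOpt_some hj
    have hiB' := notInOpt_some hiB
    have hjB' := notInOpt_some hjB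
    exact ⟨(hPD _ _ _ _ hkB hB' hi' hj' hiB' hjB' hci.ge hcj.le).1,
      (hPD _ _ _ _ hB' hkB hiB' hjB' hi' hj' hci.le hcj.ge).1⟩

lemma strictP_insert_trans_of_type_eq_left (hWO : WO τ q ge) (hDC : DC τ q ge)
    (hB : B.card + 1 < q) (hi : i ∉ B) (hj : j ∉ B) (hk : k ∉ B)
    (hij : i ≠ j) (hjk : j ≠ k) (hik : i ≠ k) (hτ : τ i = τ j)
    (h₁ : StrictP ge (insert k B) (some i) (some j))
    (h₂ : StrictP ge (insert i B) (some j) (some k)) :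
    StrictP ge (insert j B) (some i) (some k) := by
  have hB' : B.card < q := by omega
  have hij_B : ge B (some i) (some j) :=
    (hWO (insert k B) B i j ((card_insert_le k B).trans_lt hB) hB' (by simp [hik, hi])
      (by simp [hjk, hj]) hi hj hτ).2 h₁.1
  exact (hDC B i j (some k) hB hij hi hj (notInOpt_some hk) (by simpa using hik.symm)
    (by simpa using hjk.symm) hτ hij_B).1 h₂

lemma strictP_insert_trans_of_type_eq_right (hcomp : CompleteP q ge) (hWO : WO τ q ge)
    (hDC : DC τ q ge) (hB : B.card + 1 < q) (hi : i ∉ B) (hj : j ∉ B) (hk : k ∉ B)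
    (hij : i ≠ j) (hjk : j ≠ k) (hik : i ≠ k) (hτ : τ j = τ k)
    (h₁ : StrictP ge (insert k B) (some i) (some j))
    (h₂ : StrictP ge (insert i B) (some j) (some k)) :
    StrictP ge (insert j B) (some i) (some k) := by
  have hB' : B.card < q := by omega
  have hjk_B : ge B (some j) (some k) :=
    (hWO (insert i B) B j k ((card_insert_le i B).trans_lt hB) hB' (by simp [hij.symm, hj])
      (by simp [hik.symm, hk]) hj hk hτ).2 h₂.1
  have hDC' := hDC B j k (some i) hB hjk hj hk (notInOpt_some hi) (by simpa using hij)
    (by simpa using hik) hτ hjk_B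
  have hik_jB : ge (insert j B) (some i) (some k) :=
    ge_of_not_strictP hcomp ((card_insert_le j B).trans_lt hB) (by simp [hij, hi])
      (by simp [hjk.symm, hk]) fun hki => (hDC'.1 hki).2 h₁.1
  exact ⟨hik_jB, fun hki => h₁.2 (hDC'.2.1 ⟨hki, hik_jB⟩).1⟩

lemma strictP_insert_trans_of_type_eq_outer (hcomp : CompleteP q ge) (hWO : WO τ q ge)
    (hDC : DC τ q ge) (hB : B.card + 1 < q) (hi : i ∉ B) (hj : j ∉ B) (hk : k ∉ B)
    (hij : i ≠ j) (hjk : j ≠ k) (hik : i ≠ k) (hτ : τ i = τ k)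
    (h₁ : StrictP ge (insert k B) (some i) (some j))
    (h₂ : StrictP ge (insert i B) (some j) (some k)) :
    StrictP ge (insert j B) (some i) (some k) := by
  have hB' : B.card < q := by omega
  have hjB : (insert j B).card < q := (card_insert_le j B).trans_lt hB
  have hiB : i ∉ insert j B := by simp [hij, hi]
  have hkB : k ∉ insert j B := by simp [hjk.symm, hk]
  have hki : ¬ ge (insert j B) (some k) (some i) := fun hki =>
    have hki_B := (hWO (insert j B) B k i hjB hB' hkB hiB hk hi hτ.symm).2 hki
    h₂.2 ((hDC B k i (some j) hB hik.symm hk hi (notInOpt_some hj) (by simpa using hjk)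
      (by simpa using hij.symm) hτ.symm hki_B).1 h₁).1
  exact ⟨ge_of_not_strictP hcomp hjB hiB hkB fun h => hki h.1, hki⟩

lemma strictP_insert_trans_of_transfer (htr : TransP q ge) (hPD : PD τ q ge) (hWO : WO τ q ge)
    (hB : B.card + 1 < q) (hi : i ∉ B) (hj : j ∉ B) (hk : k ∉ B)
    (hij : i ≠ j) (hjk : j ≠ k) (hik : i ≠ k)
    (hτij : τ i = τ j ∨ τ k ≠ τ i ∧ τ k ≠ τ j) (hτjk : τ j = τ k ∨ τ i ≠ τ j ∧ τ i ≠ τ k)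
    (hτik : τ i = τ k ∨ τ j ≠ τ i ∧ τ j ≠ τ k)
    (h₁ : StrictP ge (insert k B) (some i) (some j))
    (h₂ : StrictP ge (insert i B) (some j) (some k)) :
    StrictP ge (insert j B) (some i) (some k) := by
  have hij_B := (strictP_insert_iff hPD hWO hB (by simp [hik, hi]) (by simp [hjk, hj]) hτij).1 h₁
  have hjk_B := (strictP_insert_iff hPD hWO hB (by simp [hij.symm, hj]) (by simp [hik.symm, hk])
    hτjk).1 h₂
  exact (strictP_insert_iff hPD hWO hB (by simp [hij, hi]) (by simp [hjk.symm, hk]) hτik).2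
    (hij_B.trans_of_transP htr (by omega) hi hj hk hjk_B)

lemma strictP_insert_trans (hcomp : CompleteP q ge) (htr : TransP q ge) (hPD : PD τ q ge)
    (hWO : WO τ q ge) (hDC : DC τ q ge) (hB : B.card + 1 < q) (hi : i ∉ B) (hj : j ∉ B)
    (hk : k ∉ B) (hij : i ≠ j) (hjk : j ≠ k) (hik : i ≠ k)
    (h₁ : StrictP ge (insert k B) (some i) (some j))
    (h₂ : StrictP ge (insert i B) (some j) (some k)) :
    StrictP ge (insert j B) (some i) (some k) := by
  by_cases hτij : τ i = τ j
  · by_cases hτjk : τ j = τ k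
    · exact strictP_insert_trans_of_transfer htr hPD hWO hB hi hj hk hij hjk hik
        (.inl hτij) (.inl hτjk) (.inl (hτij.trans hτjk)) h₁ h₂
    · exact strictP_insert_trans_of_type_eq_left hWO hDC hB hi hj hk hij hjk hik hτij h₁ h₂
  by_cases hτjk : τ j = τ k
  · exact strictP_insert_trans_of_type_eq_right hcomp hWO hDC hB hi hj hk hij hjk hik hτjk h₁ h₂
  by_cases hτik : τ i = τ k
  · exact strictP_insert_trans_of_type_eq_outer hcomp hWO hDC hB hi hj hk hij hjk hik hτik h₁ h₂
  exact strictP_insert_trans_of_transfer htr hPD hWO hB hi hj hk hij hjk hik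
    (.inr ⟨Ne.symm hτik, Ne.symm hτjk⟩) (.inr ⟨hτij, hτik⟩) (.inr ⟨Ne.symm hτij, hτjk⟩) h₁ h₂

lemma outranksWithin_trans (hcomp : CompleteP q ge) (htr : TransP q ge)
    (hPD : PD τ q ge) (hWO : WO τ q ge) (hDC : DC τ q ge) {J : Finset I} (hq : J.card ≤ q + 1)
    (hi : i ∈ J) (hj : j ∈ J) (hk : k ∈ J)
    (h₁ : OutranksWithin ge J i j) (h₂ : OutranksWithin ge J j k) :
    OutranksWithin ge J i k := by
  have hij : i ≠ j := by rintro rfl; exact StrictP.irrefl h₁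
  have hjk : j ≠ k := by rintro rfl; exact StrictP.irrefl h₂
  have hik : i ≠ k := by
    rintro rfl
    rw [OutranksWithin, pair_comm] at h₂
    exact h₁.2 h₂.1
  set B := J \ {i, j, k}
  have hJij : J \ {i, j} = insert k B := sdiff_pair_eq_insert_sdiff hk hik.symm hjk.symm
  have hJjk : J \ {j, k} = insert i B := by
    rw [sdiff_pair_eq_insert_sdiff hi hij hik, pair_comm k i, insert_comm j i]
  have hJik : J \ {i, k} = insert j B := by
    rw [sdiff_pair_eq_insert_sdiff hj hij.symm hjk, pair_comm k j]
  have hkB : k ∉ B := by simp [B]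
  have hB : B.card + 1 < q := by
    have := card_sdiff_pair hi hj hij
    rw [hJij, card_insert_of_notMem hkB] at this
    omega
  unfold OutranksWithin at *
  rw [hJij] at h₁
  rw [hJjk] at h₂
  rw [hJik]
  exact strictP_insert_trans hcomp htr hPD hWO hDC hB (by simp [B]) (by simp [B]) hkB
    hij hjk hik h₁ h₂

end

/-- **Lemma 2.** If `≿ₛ` satisfies PD, WO and DC, then any `J` with `2 ≤ |J| ≤ qₛ + 1` contains
a student `i` with the lowest priority within `J`: `j ≿ₛ^{J∖{i,j}} i` for all `j ∈ J∖{i}`. -/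
theorem lemma2 [DecidableEq I] [DecidableEq T] (τ : I → T) (q : ℕ)
    (ge : Finset I → Option I → Option I → Prop)
    (hcomp : CompleteP q ge) (htr : TransP q ge)
    (hPD : PD τ q ge) (hWO : WO τ q ge) (hDC : DC τ q ge)
    (J : Finset I) (h2 : 2 ≤ J.card) (hq : J.card ≤ q + 1) :
    ∃ i ∈ J, ∀ j ∈ J, j ≠ i → ge (J \ {i, j}) (some j) (some i) := by
  obtain ⟨i, hi, hlowest⟩ := exists_forall_not_rel (r := OutranksWithin ge J)
    (card_pos.mp (by omega)) (fun _ _ => StrictP.irrefl)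
    fun _ ha _ hb _ hc => outranksWithin_trans hcomp htr hPD hWO hDC hq ha hb hc
  refine ⟨i, hi, fun j hj hji => ge_of_not_strictP hcomp ?_ (by simp) (by simp) (hlowest j hj)⟩
  rw [card_sdiff_pair hi hj hji.symm]
  omega
end

section
/- Suppose ≿_s satisfies PD, WO, and DC, and let C_s^≿ be the sequentially constructed choice function for applicant set J. If student r_g is rejected at step g of the construction and |C^h(J)| < q_s for some h ≥ g, then ∅ ≻_s^{C^h(J)} r_g. -/
/-! Once the school is full it stays full, so `|Cʰ| < q` forces `|Cᵍ| < q`: at step `g` the only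
possible rejection is that of the applicant `a = r` herself, with `∅ ≻^{Cᵍ} r`. Below capacity
the sets `Cᵍ ⊆ Cʰ` are nested and a rejected applicant never comes back, so `Cʰ` has at least as
many students of `r`'s type as `Cᵍ`, and PD (with `j = ∅`) carries `∅ ≻ r` from `Cᵍ` to `Cʰ`. -/

open Finset

variable {I T S : Type*}

/-- The choice function `C` is consistent with the priority profile `ge = ≿ₛ`. -/
def ConsistentP [DecidableEq I] (q : ℕ)
    (ge : Finset I → Option I → Option I → Prop) (C : Finset I → Finset I) : Prop :=
  ∀ J : Finset I,
    (∀ i ∈ C J,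
      (∀ j ∈ J \ C J, ge ((C J).erase i) (some i) (some j)) ∧
        ge ((C J).erase i) (some i) none) ∧
    ((C J).card < q → (C J).card < J.card →
      ∀ j ∈ J \ C J, StrictP ge (C J) none (some j))

/-- `C` is substitutable. -/
def SubstitutableP [DecidableEq I] (C : Finset I → Finset I) : Prop :=
  ∀ (J : Finset I) (i j : I), j ∉ J → i ∈ C (insert j J) → i ∈ C J

section Build

variable {I : Type*} [LinearOrder I] [Fintype I]

/-- `i` has the lowest priority within `K`: no `j ∈ K` has strictly lower priority than `i`
with the assignment `K∖{i,j}`. -/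
def LowestIn [DecidableEq I] (ge : Finset I → Option I → Option I → Prop)
    (K : Finset I) (i : I) : Prop :=
  ∀ j ∈ K.erase i, ¬ StrictP ge ((K.erase i).erase j) (some i) (some j)

open scoped Classical in
/-- Processing a list of applicants one by one: an applicant is accepted while a seat remains
and she is acceptable with the current set; once capacity `q` is full, the most recently
arrived student (i.e. the one with the largest label) among those with lowest priority within
the current set plus the applicant is rejected. -/
noncomputable def buildC [DecidableEq I] (ge : Finset I → Option I → Option I → Prop)
    (q : ℕ) : List I → Finset I → Finset I
  | [], C => C
  | a :: rest, C =>
    if C.card < q then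
      if ge C (some a) none then buildC ge q rest (insert a C)
      else buildC ge q rest C
    else
      buildC ge q rest
        ((insert a C).erase
          ((((insert a C).filter (LowestIn ge (insert a C))).max).getD a))

/-- The choice function `Cₛ^≿` constructed from the priority profile `ge = ≿ₛ`, processing
the students of `J` in increasing label order. -/
noncomputable def Cchoice [DecidableEq I] (ge : Finset I → Option I → Option I → Prop)
    (q : ℕ) (J : Finset I) : Finset I :=
  buildC ge q (J.sort (· ≤ ·)) ∅

/-- The intermediate set `Cₛᵍ(J)` after the first `g` steps of the construction. -/
noncomputable def Cstep [DecidableEq I] (ge : Finset I → Option I → Option I → Prop)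
    (q : ℕ) (J : Finset I) (g : ℕ) : Finset I :=
  buildC ge q ((J.sort (· ≤ ·)).take g) ∅

end Build

theorem notInOpt_none {I : Type*} (J : Finset I) : NotInOpt none J := by
  simp [NotInOpt]

theorem notInOpt_some_s16 {I : Type*} {i : I} {J : Finset I} : NotInOpt (some i) J ↔ i ∉ J := by
  simp [NotInOpt]

theorem CompleteP.strictP_of_not_ge {I : Type*} {q : ℕ}
    {ge : Finset I → Option I → Option I → Prop} (hcomp : CompleteP q ge) {J : Finset I}
    (hJ : J.card < q) {a b : Option I} (ha : NotInOpt a J) (hb : NotInOpt b J)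
    (hab : ¬ ge J a b) : StrictP ge J b a :=
  ⟨(hcomp J hJ a b ha hb).resolve_left hab, hab⟩

theorem PD.strictP_none_of_subset {I T : Type*} [DecidableEq T] {τ : I → T} {q : ℕ}
    {ge : Finset I → Option I → Option I → Prop} (hPD : PD τ q ge) {J J' : Finset I}
    (hJ : J.card < q) (hJ' : J'.card < q) (hJJ' : J ⊆ J') {r : I} (hr : r ∉ J')
    (hrej : StrictP ge J none (some r)) : StrictP ge J' none (some r) :=
  (hPD J J' none (some r) hJ hJ' (notInOpt_none J) (notInOpt_some_s16.2 fun h => hr (hJJ' h))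
    (notInOpt_none J') (notInOpt_some_s16.2 hr) le_rfl
    (card_le_card (filter_subset_filter _ hJJ'))).1 hrej

section BuildC

variable {I : Type*} [LinearOrder I] [DecidableEq I]
  (ge : Finset I → Option I → Option I → Prop) (q : ℕ)

theorem buildC_append (L₁ L₂ : List I) (C : Finset I) :
    buildC ge q (L₁ ++ L₂) C = buildC ge q L₂ (buildC ge q L₁ C) := by
  induction L₁ generalizing C with
  | nil => rfl
  | cons a L ih =>
    simp only [List.cons_append, buildC]
    split_ifs <;> apply ih

open scoped Classical in
theorem buildC_singleton_of_card_lt {C : Finset I} (a : I) (hC : C.card < q) :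
    buildC ge q [a] C = if ge C (some a) none then insert a C else C := by
  simp only [buildC, if_pos hC]

theorem buildC_subset (L : List I) (C : Finset I) : buildC ge q L C ⊆ C ∪ L.toFinset := by
  induction L generalizing C with
  | nil => simp [buildC]
  | cons a L ih =>
    simp only [buildC]
    split_ifs <;> refine (ih _).trans fun x hx => ?_ <;>
      simp only [mem_union, mem_insert, mem_erase, List.toFinset_cons, List.mem_toFinset] at hx ⊢ <;>
      tauto

theorem le_card_buildC {L : List I} {C : Finset I} (hL : L.Nodup) (hLC : ∀ x ∈ L, x ∉ C)
    (hq : q ≤ C.card) : q ≤ (buildC ge q L C).card := by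
  induction L generalizing C with
  | nil => exact hq
  | cons a L ih =>
    obtain ⟨haL, hL⟩ := List.nodup_cons.1 hL
    have haC : a ∉ C := hLC a List.mem_cons_self
    simp only [buildC, if_neg (not_lt.2 hq)]
    refine ih hL (fun x hx hxC => ?_) ?_
    · rcases mem_insert.1 (mem_of_mem_erase hxC) with rfl | hxC
      · exact haL hx
      · exact hLC x (List.mem_cons_of_mem a hx) hxC
    · refine hq.trans (le_trans ?_ pred_card_le_card_erase)
      rw [card_insert_of_notMem haC, Nat.add_sub_cancel]

theorem subset_buildC_of_card_lt {L : List I} {C : Finset I} (hL : L.Nodup)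
    (hLC : ∀ x ∈ L, x ∉ C) (hq : (buildC ge q L C).card < q) : C ⊆ buildC ge q L C := by
  induction L generalizing C with
  | nil => exact subset_rfl
  | cons a L ih =>
    obtain ⟨haL, hL⟩ := List.nodup_cons.1 hL
    have hC : C.card < q := lt_of_not_ge fun hC => (le_card_buildC ge q
      (List.nodup_cons.2 ⟨haL, hL⟩) hLC hC).not_gt hq
    simp only [buildC, if_pos hC] at hq ⊢
    split_ifs at hq ⊢
    · refine (subset_insert a C).trans (ih hL (fun x hx hxC => ?_) hq)
      rcases mem_insert.1 hxC with rfl | hxC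
      · exact haL hx
      · exact hLC x (List.mem_cons_of_mem a hx) hxC
    · exact ih hL (fun x hx => hLC x (List.mem_cons_of_mem a hx)) hq

end BuildC

theorem List.Nodup.notMem_drop_take_of_mem_take {α : Type*} {L : List α} (hL : L.Nodup)
    {g h : ℕ} {x : α} (hx : x ∈ L.take g) : x ∉ (L.take h).drop g := by
  rw [List.drop_take]
  exact fun hx' => List.disjoint_take_drop hL le_rfl hx (List.mem_of_mem_take hx')

section Cstep

variable {I : Type*} [LinearOrder I] [DecidableEq I]
  {ge : Finset I → Option I → Option I → Prop} {q : ℕ} {J : Finset I} {g h : ℕ}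

theorem Cstep_subset_take (g : ℕ) :
    Cstep ge q J g ⊆ ((J.sort (· ≤ ·)).take g).toFinset := by
  simpa [Cstep] using buildC_subset ge q ((J.sort (· ≤ ·)).take g) ∅

theorem Cstep_eq_buildC_drop (hgh : g ≤ h) :
    Cstep ge q J h = buildC ge q (((J.sort (· ≤ ·)).take h).drop g) (Cstep ge q J g) := by
  have hprefix : ((J.sort (· ≤ ·)).take h).take g = (J.sort (· ≤ ·)).take g := by
    rw [List.take_take, min_eq_left hgh]
  rw [Cstep, Cstep, ← buildC_append, ← hprefix, List.take_append_drop]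

theorem notMem_Cstep_of_mem_drop {x : I} (hx : x ∈ ((J.sort (· ≤ ·)).take h).drop g) :
    x ∉ Cstep ge q J g := fun hxC =>
  (sort_nodup J _).notMem_drop_take_of_mem_take (List.mem_toFinset.1 (Cstep_subset_take g hxC)) hx

theorem Cstep_card_lt_of_le (hgh : g ≤ h) (hh : (Cstep ge q J h).card < q) :
    (Cstep ge q J g).card < q := by
  rw [Cstep_eq_buildC_drop hgh] at hh
  exact lt_of_not_ge fun hg => (le_card_buildC ge q
    ((sort_nodup J _).sublist ((List.drop_sublist _ _).trans (List.take_sublist _ _)))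
    (fun _ => notMem_Cstep_of_mem_drop) hg).not_gt hh

theorem Cstep_subset_of_le (hgh : g ≤ h) (hh : (Cstep ge q J h).card < q) :
    Cstep ge q J g ⊆ Cstep ge q J h := by
  rw [Cstep_eq_buildC_drop hgh] at hh ⊢
  exact subset_buildC_of_card_lt ge q
    ((sort_nodup J _).sublist ((List.drop_sublist _ _).trans (List.take_sublist _ _)))
    (fun _ => notMem_Cstep_of_mem_drop) hh

theorem notMem_Cstep_of_le {x : I} (hx : x ∈ (J.sort (· ≤ ·)).take g)
    (hxg : x ∉ Cstep ge q J g) (hgh : g ≤ h) : x ∉ Cstep ge q J h := fun hxh => by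
  rw [Cstep_eq_buildC_drop hgh] at hxh
  rcases mem_union.1 (buildC_subset ge q _ _ hxh) with hxC | hxL
  · exact hxg hxC
  · exact (sort_nodup J _).notMem_drop_take_of_mem_take hx (List.mem_toFinset.1 hxL)

theorem Cstep_succ {a : I} (ha : (J.sort (· ≤ ·))[g]? = some a) :
    Cstep ge q J (g + 1) = buildC ge q [a] (Cstep ge q J g) := by
  rw [Cstep, Cstep, List.take_add_one, ha, buildC_append]
  rfl

end Cstep

theorem claim2_general {I : Type*} [LinearOrder I] [DecidableEq I]
    (τ : I → ℕ) (q : ℕ)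
    (ge : Finset I → Option I → Option I → Prop)
    (hcomp : CompleteP q ge)
    (hPD : PD τ q ge) :
    ∀ (J : Finset I) (g h : ℕ) (a r : I),
      (J.sort (· ≤ ·))[g]? = some a →
      r ∈ insert a (Cstep ge q J g) → r ∉ Cstep ge q J (g + 1) →
      g < h → (Cstep ge q J h).card < q →
      StrictP ge (Cstep ge q J h) none (some r) := by
  intro J g h a r ha hr hr' hgh hh
  have hg : (Cstep ge q J g).card < q := Cstep_card_lt_of_le hgh.le hh
  have hrej : r = a ∧ r ∉ Cstep ge q J g ∧ ¬ ge (Cstep ge q J g) (some a) none := by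
    rw [Cstep_succ ha, buildC_singleton_of_card_lt ge q a hg] at hr'
    split_ifs at hr' with hacc
    · exact absurd hr hr'
    · exact ⟨(mem_insert.1 hr).resolve_right hr', hr', hacc⟩
  obtain ⟨rfl, hrg, hrej⟩ := hrej
  have hrh : r ∉ Cstep ge q J h :=
    notMem_Cstep_of_le (by rw [List.take_add_one, ha]; simp) hr' hgh
  exact hPD.strictP_none_of_subset hg hh (Cstep_subset_of_le hgh.le hh) hrh
    (hcomp.strictP_of_not_ge hg (notInOpt_some_s16.2 hrg) (notInOpt_none _) hrej)

/-- **Claim 2.** If `≿ₛ` satisfies PD, WO and DC (with students labeled first by type and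
then by weakly decreasing within-type priority), and student `r` is rejected at the step
processing the `g`-th applicant `a` (that is, `r ∈ Cᵍ(J) ∪ {a}` but `r ∉ Cᵍ⁺¹(J)`), then for
any later stage `h > g` with `|Cʰ(J)| < qₛ` we have `∅ ≻ₛ^{Cʰ(J)} r`. -/
theorem claim2 {I : Type*} [LinearOrder I] [Fintype I] [DecidableEq I]
    (τ : I → ℕ) (q : ℕ)
    (ge : Finset I → Option I → Option I → Prop)
    (hcomp : CompleteP q ge) (htr : TransP q ge)
    (hPD : PD τ q ge) (hWO : WO τ q ge) (hDC : DC τ q ge)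
    (hτmono : ∀ i j : I, τ i < τ j → i < j)
    (hlab : ∀ J : Finset I, J.card < q → ∀ i j : I, i ∉ J → j ∉ J →
      τ i = τ j → i ≤ j → ge J (some i) (some j)) :
    ∀ (J : Finset I) (g h : ℕ) (a r : I),
      (J.sort (· ≤ ·))[g]? = some a →
      r ∈ insert a (Cstep ge q J g) → r ∉ Cstep ge q J (g + 1) →
      g < h → (Cstep ge q J h).card < q →
      StrictP ge (Cstep ge q J h) none (some r) :=
  claim2_general τ q ge hcomp hPD
end
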